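/- Let μ_{u|y} be the idealized posterior, defined by dμ_{u|y}/dμ_u(u) ∝ exp(-(1/2)‖y - G(u)‖_Γ²), and let ν_{u|y} be the U-marginal of the joint posterior ν_{u,a|y}, which satisfies dν_{u|y}/dμ_u(u) ∝ ∫_A exp(-(1/2)‖y - G^a(u)‖_Γ²) dν_a(a). If G is bounded (sup_u ‖G(u)‖ < ∞), then there exist constants C > 0 and ε₀ > 0 (depending only on y, Γ and sup_u ‖G(u)‖, but not on ε or the family {G^a}) such that for every 0 < ε ≤ ε₀, if ‖G^a(u) - G(u)‖ < ε for (μ_u ⊗ ν_a)-almost every (u,a), then d_TV(ν_{u|y}, μ_{u|y}) ≤ Cε. -/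

import Mathlib

open MeasureTheory Matrix

/-- The squared weighted norm `‖x‖_Γ² = ‖Γ^{-1/2} x‖² = xᵀ Γ⁻¹ x` associated to a
positive definite covariance matrix `Γ`. -/
noncomputable def wSq {m : ℕ} (Γ : Matrix (Fin m) (Fin m) ℝ) (v : EuclideanSpace ℝ (Fin m)) : ℝ :=
  (fun i => v i) ⬝ᵥ Γ⁻¹.mulVec (fun i => v i)

/-- Total variation distance between two measures:
`d_TV(μ,ν) = sup_B |μ(B) - ν(B)|` over measurable sets `B`. -/
noncomputable def tvDist {X : Type*} [MeasurableSpace X] (μ ν : Measure X) : ℝ :=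
  ⨆ B : {B : Set X // MeasurableSet B}, |(μ (B : Set X)).toReal - (ν (B : Set X)).toReal|


/-!
Both posteriors are normalizations of densities with respect to `μ_u`: the likelihood
`e(u) = exp(-½‖y - G u‖_Γ²)` and its average `I(u) = ∫ exp(-½‖y - Gᵃ u‖_Γ²) dν_a(a)`.
Since `G` is bounded, the residuals `y - G u` stay in a fixed ball, on which `e ≥ δ > 0` and the
likelihood is Lipschitz, so `|I - e| ≤ L ε` almost everywhere. Once `L ε ≤ δ / 2` the normalizing
constants are bounded below by `δ / 2`, the normalized densities differ by `O(ε)` uniformly, and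
the total variation distance is bounded by the sup of the difference of densities.
-/

open scoped RealInnerProductSpace

section TotalVariation

variable {X : Type*} [MeasurableSpace X] {μ : Measure X}

lemma toReal_withDensity_ofReal_apply {f : X → ℝ} (hf : Integrable f μ) (hf0 : 0 ≤ᵐ[μ] f)
    {B : Set X} (hB : MeasurableSet B) :
    ((μ.withDensity fun x => ENNReal.ofReal (f x)) B).toReal = ∫ x in B, f x ∂μ := by
  rw [withDensity_apply _ hB,
    ← ofReal_integral_eq_lintegral_ofReal hf.restrict (ae_restrict_of_ae hf0),
    ENNReal.toReal_ofReal (integral_nonneg_of_ae (ae_restrict_of_ae hf0))]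

lemma tvDist_withDensity_le [IsProbabilityMeasure μ] {f g : X → ℝ}
    (hf : Integrable f μ) (hg : Integrable g μ) (hf0 : 0 ≤ᵐ[μ] f) (hg0 : 0 ≤ᵐ[μ] g) {c : ℝ}
    (hfg : ∀ᵐ x ∂μ, |f x - g x| ≤ c) :
    tvDist (μ.withDensity fun x => ENNReal.ofReal (f x))
      (μ.withDensity fun x => ENNReal.ofReal (g x)) ≤ c := by
  have : Nonempty {B : Set X // MeasurableSet B} := ⟨⟨∅, .empty⟩⟩
  obtain ⟨x, hx⟩ := hfg.exists
  have hc : 0 ≤ c := (abs_nonneg _).trans hx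
  refine ciSup_le fun ⟨B, hB⟩ => ?_
  rw [toReal_withDensity_ofReal_apply hf hf0 hB, toReal_withDensity_ofReal_apply hg hg0 hB,
    ← integral_sub hf.restrict hg.restrict]
  calc |∫ x in B, (f x - g x) ∂μ| ≤ c * μ.real B := by
        simpa using norm_integral_le_of_norm_le_const
          (ae_restrict_of_ae (hfg.mono fun _ h => (Real.norm_eq_abs _).trans_le h))
    _ ≤ c * 1 := by gcongr; exact measureReal_le_one
    _ = c := mul_one c

lemma abs_integral_sub_le [IsProbabilityMeasure μ] {f : X → ℝ} (hf : Integrable f μ) {c κ : ℝ}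
    (h : ∀ᵐ x ∂μ, |f x - c| ≤ κ) : |∫ x, f x ∂μ - c| ≤ κ := by
  have hsub : ∫ x, f x ∂μ - c = ∫ x, (f x - c) ∂μ := by
    rw [integral_sub hf (integrable_const c), integral_const]
    simp
  rw [hsub]
  simpa using norm_integral_le_of_norm_le_const (h.mono fun _ h => (Real.norm_eq_abs _).trans_le h)

lemma abs_div_sub_div_le {a b A B δ κ : ℝ} (hδ : 0 < δ) (hA : δ / 2 ≤ A) (hB : δ ≤ B)
    (hb : |b| ≤ 1) (hab : |a - b| ≤ κ) (hAB : |A - B| ≤ κ) :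
    |a / A - b / B| ≤ (2 / δ + 2 / δ ^ 2) * κ := by
  have hA0 : 0 < A := by linarith
  have hB0 : 0 < B := by linarith
  have hκ : 0 ≤ κ := (abs_nonneg _).trans hab
  have hsplit : a / A - b / B = (a - b) / A + b * (B - A) / (A * B) := by
    field_simp
    ring
  calc |a / A - b / B| ≤ |(a - b) / A| + |b * (B - A) / (A * B)| := hsplit ▸ abs_add_le _ _
    _ = |a - b| / A + |b| * |B - A| / (A * B) := by
        rw [abs_div, abs_div, abs_mul, abs_of_pos hA0, abs_of_pos (mul_pos hA0 hB0)]
    _ ≤ κ / (δ / 2) + 1 * κ / (δ / 2 * δ) := by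
        rw [abs_sub_comm] at hAB
        gcongr
    _ = (2 / δ + 2 / δ ^ 2) * κ := by
        field_simp

lemma tvDist_withDensity_normalized_le [IsProbabilityMeasure μ] {f g : X → ℝ}
    (hf : Integrable f μ) (hg : Integrable g μ) {δ κ : ℝ} (hδ : 0 < δ)
    (hg_lower : ∀ x, δ ≤ g x) (hg_upper : ∀ x, g x ≤ 1)
    (hfg : ∀ᵐ x ∂μ, |f x - g x| ≤ κ) (hκ : κ ≤ δ / 2) :
    tvDist (μ.withDensity fun x => ENNReal.ofReal (f x / ∫ x', f x' ∂μ))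
      (μ.withDensity fun x => ENNReal.ofReal (g x / ∫ x', g x' ∂μ)) ≤ (2 / δ + 2 / δ ^ 2) * κ := by
  have hf_lower : ∀ᵐ x ∂μ, δ / 2 ≤ f x :=
    hfg.mono fun x hx => by linarith [(abs_le.1 hx).1, hg_lower x]
  have hZf : δ / 2 ≤ ∫ x, f x ∂μ := by
    simpa using integral_mono_ae (integrable_const _) hf hf_lower
  have hZg : δ ≤ ∫ x, g x ∂μ := by
    simpa using integral_mono (integrable_const _) hg hg_lower
  have hZfg : |∫ x, f x ∂μ - ∫ x, g x ∂μ| ≤ κ := by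
    rw [← integral_sub hf hg]
    simpa using norm_integral_le_of_norm_le_const
      (hfg.mono fun _ h => (Real.norm_eq_abs _).trans_le h)
  refine tvDist_withDensity_le (hf.div_const _) (hg.div_const _)
    (hf_lower.mono fun x hx => div_nonneg (by linarith) (by linarith))
    (.of_forall fun x => div_nonneg (hδ.le.trans (hg_lower x)) (by linarith)) ?_
  filter_upwards [hfg] with x hx
  exact abs_div_sub_div_le hδ hZf hZg
    (abs_le.2 ⟨by linarith [hg_lower x], hg_upper x⟩) hx hZfg

end TotalVariation

section GaussianLikelihood

variable {m : ℕ}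

lemma wSq_eq_inner (Γ : Matrix (Fin m) (Fin m) ℝ) (v : EuclideanSpace ℝ (Fin m)) :
    wSq Γ v = ⟪v, toEuclideanCLM (𝕜 := ℝ) Γ⁻¹ v⟫ :=
  (inner_toEuclideanCLM _ _ _).symm

lemma continuous_wSq (Γ : Matrix (Fin m) (Fin m) ℝ) : Continuous (wSq Γ) := by
  simp_rw [funext (wSq_eq_inner Γ)]
  fun_prop

lemma wSq_nonneg {Γ : Matrix (Fin m) (Fin m) ℝ} (hΓ : Γ.PosDef) (v : EuclideanSpace ℝ (Fin m)) :
    0 ≤ wSq Γ v := by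
  simpa [wSq] using hΓ.inv.posSemidef.re_dotProduct_nonneg (fun i => v i)

lemma wSq_le (Γ : Matrix (Fin m) (Fin m) ℝ) (v : EuclideanSpace ℝ (Fin m)) :
    wSq Γ v ≤ ‖toEuclideanCLM (𝕜 := ℝ) Γ⁻¹‖ * ‖v‖ ^ 2 := by
  rw [wSq_eq_inner]
  calc ⟪v, toEuclideanCLM (𝕜 := ℝ) Γ⁻¹ v⟫ ≤ ‖v‖ * ‖toEuclideanCLM (𝕜 := ℝ) Γ⁻¹ v‖ :=
        real_inner_le_norm _ _
    _ ≤ ‖v‖ * (‖toEuclideanCLM (𝕜 := ℝ) Γ⁻¹‖ * ‖v‖) := by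
        gcongr
        exact ContinuousLinearMap.le_opNorm _ _
    _ = ‖toEuclideanCLM (𝕜 := ℝ) Γ⁻¹‖ * ‖v‖ ^ 2 := by ring

lemma abs_wSq_sub_le (Γ : Matrix (Fin m) (Fin m) ℝ) (v w : EuclideanSpace ℝ (Fin m)) :
    |wSq Γ v - wSq Γ w| ≤ ‖toEuclideanCLM (𝕜 := ℝ) Γ⁻¹‖ * (‖v‖ + ‖w‖) * ‖v - w‖ := by
  set T := toEuclideanCLM (𝕜 := ℝ) Γ⁻¹
  have hsplit : wSq Γ v - wSq Γ w = ⟪v - w, T v⟫ + ⟪w, T (v - w)⟫ := by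
    simp only [wSq_eq_inner, map_sub, inner_sub_left, inner_sub_right, T]
    ring
  calc |wSq Γ v - wSq Γ w| ≤ ‖v - w‖ * ‖T v‖ + ‖w‖ * ‖T (v - w)‖ := by
        rw [hsplit]
        exact (abs_add_le _ _).trans (add_le_add (abs_real_inner_le_norm _ _)
          (abs_real_inner_le_norm _ _))
    _ ≤ ‖v - w‖ * (‖T‖ * ‖v‖) + ‖w‖ * (‖T‖ * ‖v - w‖) := by
        gcongr <;> exact ContinuousLinearMap.le_opNorm _ _
    _ = ‖T‖ * (‖v‖ + ‖w‖) * ‖v - w‖ := by ring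

lemma abs_exp_sub_exp_le_of_nonpos {a b : ℝ} (ha : a ≤ 0) (hb : b ≤ 0) :
    |Real.exp a - Real.exp b| ≤ |a - b| := by
  wlog hba : b ≤ a generalizing a b
  · rw [abs_sub_comm, abs_sub_comm a b]
    exact this hb ha (le_of_not_ge hba)
  rw [abs_of_nonneg (sub_nonneg.2 (Real.exp_le_exp.2 hba)), abs_of_nonneg (sub_nonneg.2 hba)]
  have hexp_b : Real.exp b = Real.exp a * Real.exp (b - a) := by rw [← Real.exp_add]; ring_nf
  nlinarith [Real.add_one_le_exp (b - a), Real.exp_le_one_iff.2 ha, Real.exp_pos a]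

noncomputable def gaussLik (Γ : Matrix (Fin m) (Fin m) ℝ) (v : EuclideanSpace ℝ (Fin m)) : ℝ :=
  Real.exp (-(1 / 2) * wSq Γ v)

lemma continuous_gaussLik (Γ : Matrix (Fin m) (Fin m) ℝ) : Continuous (gaussLik Γ) :=
  Real.continuous_exp.comp (continuous_const.mul (continuous_wSq Γ))

lemma gaussLik_pos (Γ : Matrix (Fin m) (Fin m) ℝ) (v : EuclideanSpace ℝ (Fin m)) :
    0 < gaussLik Γ v :=
  Real.exp_pos _

lemma gaussLik_le_one {Γ : Matrix (Fin m) (Fin m) ℝ} (hΓ : Γ.PosDef)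
    (v : EuclideanSpace ℝ (Fin m)) : gaussLik Γ v ≤ 1 :=
  Real.exp_le_one_iff.2 (by nlinarith [wSq_nonneg hΓ v])

lemma exp_le_gaussLik (Γ : Matrix (Fin m) (Fin m) ℝ) (v : EuclideanSpace ℝ (Fin m)) :
    Real.exp (-(1 / 2) * (‖toEuclideanCLM (𝕜 := ℝ) Γ⁻¹‖ * ‖v‖ ^ 2)) ≤ gaussLik Γ v :=
  Real.exp_le_exp.2 (by nlinarith [wSq_le Γ v])

lemma abs_gaussLik_sub_le {Γ : Matrix (Fin m) (Fin m) ℝ} (hΓ : Γ.PosDef)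
    {v w : EuclideanSpace ℝ (Fin m)} {M : ℝ} (hv : ‖v‖ ≤ M) (hw : ‖w‖ ≤ M) :
    |gaussLik Γ v - gaussLik Γ w| ≤ ‖toEuclideanCLM (𝕜 := ℝ) Γ⁻¹‖ * M * ‖v - w‖ := by
  calc |gaussLik Γ v - gaussLik Γ w| ≤ |-(1 / 2) * wSq Γ v - -(1 / 2) * wSq Γ w| :=
        abs_exp_sub_exp_le_of_nonpos (by nlinarith [wSq_nonneg hΓ v])
          (by nlinarith [wSq_nonneg hΓ w])
    _ = 1 / 2 * |wSq Γ v - wSq Γ w| := by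
        rw [← mul_sub, abs_mul, abs_neg, abs_of_pos one_half_pos]
    _ ≤ 1 / 2 * (‖toEuclideanCLM (𝕜 := ℝ) Γ⁻¹‖ * (M + M) * ‖v - w‖) := by
        gcongr
        exact (abs_wSq_sub_le Γ v w).trans (by gcongr)
    _ = ‖toEuclideanCLM (𝕜 := ℝ) Γ⁻¹‖ * M * ‖v - w‖ := by ring

lemma integrable_gaussLik_comp {Γ : Matrix (Fin m) (Fin m) ℝ} (hΓ : Γ.PosDef)
    {X : Type*} [MeasurableSpace X] {μ : Measure X} [IsFiniteMeasure μ]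
    {F : X → EuclideanSpace ℝ (Fin m)} (hF : Measurable F) :
    Integrable (fun x => gaussLik Γ (F x)) μ :=
  .of_bound ((continuous_gaussLik Γ).measurable.comp hF).aestronglyMeasurable 1
    (.of_forall fun x => by
      rw [Real.norm_of_nonneg (gaussLik_pos Γ _).le]
      exact gaussLik_le_one hΓ _)

end GaussianLikelihood

theorem stmt3_general {m : ℕ} (Γ : Matrix (Fin m) (Fin m) ℝ) (hΓ : Γ.PosDef)
    (y : EuclideanSpace ℝ (Fin m))
    {U A : Type*} [MeasurableSpace U]
    [MeasurableSpace A]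
    (μu : Measure U) [IsProbabilityMeasure μu] (νa : Measure A) [IsProbabilityMeasure νa]
    (G : U → EuclideanSpace ℝ (Fin m)) (hG : Measurable G)
    (R : ℝ) (hGbd : ∀ u, ‖G u‖ ≤ R) :
    ∃ C > (0 : ℝ), ∃ ε₀ > (0 : ℝ),
      ∀ (Ga : A → U → EuclideanSpace ℝ (Fin m)),
        Measurable (fun p : U × A => Ga p.2 p.1) →
      ∀ (ε : ℝ), 0 < ε → ε ≤ ε₀ →
        (∀ᵐ p ∂(μu.prod νa), ‖Ga p.2 p.1 - G p.1‖ < ε) →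
        tvDist
          (μu.withDensity fun u => ENNReal.ofReal
            ((∫ a, Real.exp (-(1/2) * wSq Γ (y - Ga a u)) ∂νa) /
              (∫ u', (∫ a, Real.exp (-(1/2) * wSq Γ (y - Ga a u')) ∂νa) ∂μu)))
          (μu.withDensity fun u => ENNReal.ofReal
            (Real.exp (-(1/2) * wSq Γ (y - G u)) /
              (∫ u', Real.exp (-(1/2) * wSq Γ (y - G u')) ∂μu)))
          ≤ C * ε := by
  set K := ‖toEuclideanCLM (𝕜 := ℝ) Γ⁻¹‖
  set M := ‖y‖ + |R| + 1
  set δ := Real.exp (-(1 / 2) * (K * M ^ 2))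
  set L := K * M + 1
  have hL : 0 < L := by positivity
  have hδ : 0 < δ := Real.exp_pos _
  refine ⟨(2 / δ + 2 / δ ^ 2) * L, by positivity, min 1 (δ / (2 * L)), by positivity,
    fun Ga hGa ε hε hεε₀ hae => ?_⟩
  have hε1 : ε ≤ 1 := hεε₀.trans (min_le_left _ _)
  have hLε : L * ε ≤ δ / 2 := by
    have h := hεε₀.trans (min_le_right _ _)
    rw [le_div_iff₀ (by positivity)] at h
    linarith
  have hres : ∀ u, ‖y - G u‖ ≤ M := fun u =>
    (norm_sub_le _ _).trans (by linarith [hGbd u, le_abs_self R])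
  have hlower : ∀ u, δ ≤ gaussLik Γ (y - G u) := fun u =>
    (Real.exp_le_exp.2 (mul_le_mul_of_nonpos_left (by gcongr; exact hres u) (by norm_num))).trans
      (exp_le_gaussLik Γ _)
  have hclose : ∀ᵐ u ∂μu,
      |∫ a, gaussLik Γ (y - Ga a u) ∂νa - gaussLik Γ (y - G u)| ≤ L * ε := by
    filter_upwards [Measure.ae_ae_of_ae_prod hae] with u hu
    refine abs_integral_sub_le
      (integrable_gaussLik_comp hΓ ((hGa.comp measurable_prodMk_left).const_sub y))
      (hu.mono fun a ha => ?_)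
    have hresa : ‖y - Ga a u‖ ≤ M := by
      have := norm_sub_le y (Ga a u)
      have := norm_sub_norm_le (Ga a u) (G u)
      linarith [hGbd u, le_abs_self R]
    calc |gaussLik Γ (y - Ga a u) - gaussLik Γ (y - G u)|
        ≤ K * M * ‖(y - Ga a u) - (y - G u)‖ := abs_gaussLik_sub_le hΓ hresa (hres u)
      _ ≤ K * M * ε := by
        rw [sub_sub_sub_cancel_left, norm_sub_rev]
        gcongr
      _ ≤ L * ε := by gcongr; linarith
  refine (tvDist_withDensity_normalized_le (f := fun u => ∫ a, gaussLik Γ (y - Ga a u) ∂νa)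
    (g := fun u => gaussLik Γ (y - G u))
    (integrable_gaussLik_comp hΓ (hGa.const_sub y)).integral_prod_left
    (integrable_gaussLik_comp hΓ (hG.const_sub y)) hδ hlower (fun u => gaussLik_le_one hΓ _)
    hclose hLε).trans_eq (by ring)

/-- Well-posedness of the posterior (general, possibly infinite-dimensional version).
With `dμ_{u|y}/dμ_u ∝ exp(-(1/2)‖y-G(u)‖_Γ²)` and
`dν_{u|y}/dμ_u ∝ ∫_A exp(-(1/2)‖y-Gᵃ(u)‖_Γ²) dν_a(a)`, if `G` is bounded (`‖G(u)‖ ≤ R`), then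
there are `C > 0` and `ε₀ > 0` (independent of `ε` and of the family `{Gᵃ}`) such that for all
`0 < ε ≤ ε₀`, if `‖Gᵃ(u) - G(u)‖ < ε` for `(μ_u ⊗ ν_a)`-a.e. `(u,a)`, then
`d_TV(ν_{u|y}, μ_{u|y}) ≤ C ε`. -/
theorem stmt3 {m : ℕ} (Γ : Matrix (Fin m) (Fin m) ℝ) (hΓ : Γ.PosDef)
    (y : EuclideanSpace ℝ (Fin m))
    {U A : Type*} [MeasurableSpace U] [StandardBorelSpace U]
    [MeasurableSpace A] [StandardBorelSpace A]
    (μu : Measure U) [IsProbabilityMeasure μu] (νa : Measure A) [IsProbabilityMeasure νa]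
    (G : U → EuclideanSpace ℝ (Fin m)) (hG : Measurable G)
    (R : ℝ) (hGbd : ∀ u, ‖G u‖ ≤ R) :
    ∃ C > (0 : ℝ), ∃ ε₀ > (0 : ℝ),
      ∀ (Ga : A → U → EuclideanSpace ℝ (Fin m)),
        Measurable (fun p : U × A => Ga p.2 p.1) →
      ∀ (ε : ℝ), 0 < ε → ε ≤ ε₀ →
        (∀ᵐ p ∂(μu.prod νa), ‖Ga p.2 p.1 - G p.1‖ < ε) →
        tvDist
          (μu.withDensity fun u => ENNReal.ofReal
            ((∫ a, Real.exp (-(1/2) * wSq Γ (y - Ga a u)) ∂νa) /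
              (∫ u', (∫ a, Real.exp (-(1/2) * wSq Γ (y - Ga a u')) ∂νa) ∂μu)))
          (μu.withDensity fun u => ENNReal.ofReal
            (Real.exp (-(1/2) * wSq Γ (y - G u)) /
              (∫ u', Real.exp (-(1/2) * wSq Γ (y - G u')) ∂μu)))
          ≤ C * ε :=
  stmt3_general Γ hΓ y μu νa G hG R hGbd
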